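/- Alexandrov's lemma, Euclidean angle version: Let triangles Δpqr and Δpqs in the Euclidean plane be glued exteriorly along the common side [pq] (r and s on opposite sides of line pq), and let Δabc be a Euclidean triangle with |ab| = |pr|, |ac| = |ps|, |bc| = |qr| + |qs|. Then ∠pqr + ∠pqs ≤ π if and only if ∠prq ≥ ∠abc and ∠psq ≥ ∠acb; and ∠pqr + ∠pqs ≥ π if and only if ∠prq ≤ ∠abc and ∠psq ≤ ∠acb. -/
import Mathlib


open Set EuclideanGeometry

private lemma cos_le_cos_iff' {x y : ℝ} (hx0 : 0 ≤ x) (hxp : x ≤ Real.pi)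
    (hy0 : 0 ≤ y) (hyp : y ≤ Real.pi) :
    Real.cos y ≤ Real.cos x ↔ x ≤ y := by
  constructor
  · intro h
    by_contra hlt
    push_neg at hlt
    have := Real.strictAntiOn_cos ⟨hy0, hyp⟩ ⟨hx0, hxp⟩ hlt
    linarith
  · intro h
    rcases eq_or_lt_of_le h with rfl | h
    · exact le_rfl
    · exact (Real.strictAntiOn_cos ⟨hx0, hxp⟩ ⟨hy0, hyp⟩ h).le

/-- Hinge (SAS comparison) iff: with two pairs of equal sides at the apexes,
the angles compare the same way as the opposite sides. -/
private lemma hinge {x y z x' y' z' : EuclideanSpace ℝ (Fin 2)}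
    (hy : dist x y = dist x' y') (hz : dist x z = dist x' z')
    (hy0 : x ≠ y) (hz0 : x ≠ z) :
    ∠ y x z ≤ ∠ y' x' z' ↔ dist y z ≤ dist y' z' := by
  have h1 := EuclideanGeometry.law_cos y x z
  have h2 := EuclideanGeometry.law_cos y' x' z'
  have hy' : dist y x = dist y' x' := by rw [dist_comm, hy, dist_comm]
  have hz' : dist z x = dist z' x' := by rw [dist_comm, hz, dist_comm]
  have hyp : 0 < dist y x := by rw [dist_comm]; exact dist_pos.2 hy0
  have hzp : 0 < dist z x := by rw [dist_comm]; exact dist_pos.2 hz0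
  rw [← cos_le_cos_iff' (angle_nonneg _ _ _) (angle_le_pi _ _ _)
      (angle_nonneg _ _ _) (angle_le_pi _ _ _)]
  rw [hy', hz'] at h1
  have hA : 0 < dist y' x' := hy' ▸ hyp
  have hB : 0 < dist z' x' := hz' ▸ hzp
  have key : dist y z * dist y z - dist y' z' * dist y' z' =
      2 * dist y' x' * dist z' x' *
        (Real.cos (∠ y' x' z') - Real.cos (∠ y x z)) := by
    linear_combination h1 - h2
  constructor
  · intro h
    have hsq : dist y z * dist y z ≤ dist y' z' * dist y' z' := by
      nlinarith [mul_pos hA hB]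
    nlinarith [dist_nonneg (x := y) (y := z), dist_nonneg (x := y') (y := z')]
  · intro h
    have hsq : dist y z * dist y z ≤ dist y' z' * dist y' z' :=
      mul_le_mul h h dist_nonneg dist_nonneg
    nlinarith [mul_pos hA hB]

/-- Key step of Alexandrov's lemma: the angle sum condition at `q` is equivalent to
the single angle comparison at `r` (and at `b`). -/
private lemma alexandrov_aux (p q r s a b c : EuclideanSpace ℝ (Fin 2))
    (hqp : q ≠ p) (hqr : q ≠ r) (hqs : q ≠ s) (hrp : r ≠ p)
    (hab : dist a b = dist p r) (hac : dist a c = dist p s)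
    (hbc : dist b c = dist q r + dist q s) :
    (∠ p q r + ∠ p q s ≤ Real.pi ↔ ∠ a b c ≤ ∠ p r q) ∧
    (Real.pi ≤ ∠ p q r + ∠ p q s ↔ ∠ p r q ≤ ∠ a b c) := by
  set d1 := dist q r with hd1
  set d2 := dist q s with hd2
  have hd1p : 0 < d1 := dist_pos.2 hqr
  have hd2p : 0 < d2 := dist_pos.2 hqs
  have htp : 0 < d2 / d1 := div_pos hd2p hd1p
  -- the point `s'` on the ray from `r` through `q`, beyond `q`, with `dist q s' = d2`
  set s' : EuclideanSpace ℝ (Fin 2) := (d2 / d1) • (q - r) + q with hs'def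
  have hs'q : s' - q = (d2 / d1) • (q - r) := by
    simp [hs'def]
  have hs'r : s' - r = (1 + d2 / d1) • (q - r) := by
    have : s' - r = (d2 / d1) • (q - r) + (q - r) := by
      rw [hs'def]; abel
    rw [this, add_smul, one_smul, add_comm]
  have hnqr : ‖q - r‖ = d1 := by rw [← dist_eq_norm]
  -- `dist q s' = d2`
  have hqs' : dist q s' = d2 := by
    rw [dist_comm, dist_eq_norm, hs'q, norm_smul, Real.norm_eq_abs,
      abs_of_pos htp, hnqr, div_mul_cancel₀ _ (ne_of_gt hd1p)]
  -- `dist r s' = d1 + d2`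
  have hrs' : dist r s' = d1 + d2 := by
    rw [dist_comm, dist_eq_norm, hs'r, norm_smul, Real.norm_eq_abs,
      abs_of_pos (by positivity), hnqr]
    field_simp
  -- `∠ p q s' = π - ∠ p q r`
  have hangle_q : ∠ p q s' = Real.pi - ∠ p q r := by
    have h1 : (s' : EuclideanSpace ℝ (Fin 2)) -ᵥ q = -((d2 / d1) • (r - q)) := by
      rw [vsub_eq_sub, hs'q, ← smul_neg, neg_sub]
    rw [EuclideanGeometry.angle, h1, InnerProductGeometry.angle_neg_right,
      InnerProductGeometry.angle_smul_right_of_pos _ _ htp]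
    rfl
  -- `∠ p r s' = ∠ p r q`
  have hangle_r : ∠ p r s' = ∠ p r q := by
    have h1 : (s' : EuclideanSpace ℝ (Fin 2)) -ᵥ r = (1 + d2 / d1) • (q - r) := by
      rw [vsub_eq_sub, hs'r]
    rw [EuclideanGeometry.angle, h1,
      InnerProductGeometry.angle_smul_right_of_pos _ _ (by positivity)]
    rfl
  have hqs'ne : q ≠ s' := by
    intro h; rw [← h, dist_self] at hqs'; linarith
  have hrs'ne : r ≠ s' := by
    intro h; rw [← h, dist_self] at hrs'; linarith
  have hba : b ≠ a := by
    intro h; rw [h, dist_self] at hab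
    exact (ne_of_gt (dist_pos.2 hrp.symm)) hab.symm
  have hbc' : b ≠ c := by
    intro h; rw [h, dist_self] at hbc; linarith
  -- hinge at `q`: compare `s` and `s'`
  have hingeQ : ∠ p q s ≤ ∠ p q s' ↔ dist p s ≤ dist p s' :=
    hinge rfl hqs'.symm hqp hqs
  have hingeQ' : ∠ p q s' ≤ ∠ p q s ↔ dist p s' ≤ dist p s :=
    hinge rfl hqs' hqp hqs'ne
  -- hinge at `b` / `r`
  have hba' : dist b a = dist r p := by rw [dist_comm, hab, dist_comm]
  have hbc'' : dist b c = dist r s' := by rw [hbc, hrs']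
  have hingeR : ∠ a b c ≤ ∠ p r s' ↔ dist a c ≤ dist p s' :=
    hinge (x := b) (y := a) (z := c) (x' := r) (y' := p) (z' := s')
      hba' hbc'' hba hbc'
  have hingeR' : ∠ p r s' ≤ ∠ a b c ↔ dist p s' ≤ dist a c :=
    hinge (x := r) (y := p) (z := s') (x' := b) (y' := a) (z' := c)
      hba'.symm hbc''.symm hrp hrs'ne
  constructor
  · constructor
    · intro h
      have h1 : ∠ p q s ≤ ∠ p q s' := by rw [hangle_q]; linarith
      have h2 : dist p s ≤ dist p s' := hingeQ.1 h1
      rw [← hangle_r]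
      exact hingeR.2 (by rw [hac]; exact h2)
    · intro h
      have h2 : dist a c ≤ dist p s' := hingeR.1 (by rwa [hangle_r])
      have h1 : ∠ p q s ≤ ∠ p q s' := hingeQ.2 (by rw [← hac]; exact h2)
      rw [hangle_q] at h1; linarith
  · constructor
    · intro h
      have h1 : ∠ p q s' ≤ ∠ p q s := by rw [hangle_q]; linarith
      have h2 : dist p s' ≤ dist p s := hingeQ'.1 h1
      rw [← hangle_r]
      exact hingeR'.2 (by rw [hac]; exact h2)
    · intro h
      have h2 : dist p s' ≤ dist a c := hingeR'.1 (by rwa [hangle_r])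
      have h1 : ∠ p q s' ≤ ∠ p q s := hingeQ'.2 (by rw [← hac]; exact h2)
      rw [hangle_q] at h1; linarith

/-- **Alexandrov's lemma (Lemma 3.4, Euclidean case `k = 0`).**
Triangles `Δpqr` and `Δpqs` in the Euclidean plane are glued exteriorly along the common
side `[pq]` (i.e. `r` and `s` lie strictly on opposite sides of the line through `p, q`),
and `Δabc` is a Euclidean triangle with `|ab| = |pr|`, `|ac| = |ps|`,
`|bc| = |qr| + |qs|`. Then `∠pqr + ∠pqs ≤ π` iff `∠prq ≥ ∠abc` and `∠psq ≥ ∠acb`,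
and `∠pqr + ∠pqs ≥ π` iff `∠prq ≤ ∠abc` and `∠psq ≤ ∠acb`. -/
theorem alexandrov_lemma
    (p q r s a b c : EuclideanSpace ℝ (Fin 2))
    (hpq : p ≠ q)
    (hopp : (affineSpan ℝ {p, q}).SOppSide r s)
    (hab : dist a b = dist p r)
    (hac : dist a c = dist p s)
    (hbc : dist b c = dist q r + dist q s) :
    (∠ p q r + ∠ p q s ≤ Real.pi ↔ (∠ a b c ≤ ∠ p r q ∧ ∠ a c b ≤ ∠ p s q)) ∧
    (Real.pi ≤ ∠ p q r + ∠ p q s ↔ (∠ p r q ≤ ∠ a b c ∧ ∠ p s q ≤ ∠ a c b)) := by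
  have hpmem : p ∈ affineSpan ℝ ({p, q} : Set (EuclideanSpace ℝ (Fin 2))) :=
    mem_affineSpan ℝ (by simp)
  have hqmem : q ∈ affineSpan ℝ ({p, q} : Set (EuclideanSpace ℝ (Fin 2))) :=
    mem_affineSpan ℝ (by simp)
  have hr : r ∉ affineSpan ℝ ({p, q} : Set (EuclideanSpace ℝ (Fin 2))) := hopp.2.1
  have hs : s ∉ affineSpan ℝ ({p, q} : Set (EuclideanSpace ℝ (Fin 2))) := hopp.2.2
  have hqr : q ≠ r := fun h => hr (h ▸ hqmem)
  have hqs : q ≠ s := fun h => hs (h ▸ hqmem)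
  have hrp : r ≠ p := fun h => hr (h ▸ hpmem)
  have hsp : s ≠ p := fun h => hs (h ▸ hpmem)
  have A := alexandrov_aux p q r s a b c hpq.symm hqr hqs hrp hab hac hbc
  have B := alexandrov_aux p q s r a c b hpq.symm hqs hqr hsp hac hab
    (by rw [dist_comm, hbc]; ring)
  rw [add_comm (∠ p q s)] at B
  constructor
  · exact ⟨fun h => ⟨A.1.1 h, B.1.1 h⟩, fun h => A.1.2 h.1⟩
  · exact ⟨fun h => ⟨A.2.1 h, B.2.1 h⟩, fun h => A.2.2 h.1⟩
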